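/- Let n ≥ 2, let 0 ≤ k̲ < k̄ (k̄ possibly infinite), let ε > 0, and let Γ ∈ ℝ^{n×n} be symmetric positive definite. Suppose: (i) true densities ρ^l_k ∈ [0, ϱ_m] for all l ∈ {1,…,n} and all k, mean estimates ρ̂^l_k have errors η^l_k = ρ̂^l_k − ρ^l_k, and the Euclidean norm of the error vector satisfies ‖η_{k̲}‖ < ε; (ii) the boundary error pair η̌_k = (η^1_k, η^n_k) obeys, for k̲ ≤ k < k̄, the 2-dimensional Kalman-filter error recursion η̌_{k+1} = (I − Ǩ_{k+1})·η̌_k, where Ǩ_{k+1} = Γ̌_{k+1|k}(Γ̌_{k+1|k} + Ř_{k+1})^{−1}, Γ̌_{k+1|k} = Γ̌_{k|k} + Q̌_k, Γ̌_{k+1|k+1} = Γ̌_{k+1|k} − Ǩ_{k+1}Γ̌_{k+1|k}, with q_1·I < Q̌_k < q_2·I, r_1·I < Ř_{k+1} < r_2·I and Γ̌_{k̲|k̲} symmetric positive definite; (iii) for each k with k̲ ≤ k < k̄ and each l ∈ {2,…,n−1}, ρ̂^l_{k+1} = ρ̂^l_k + (Δt/Δx)·(𝔣(ρ̂^{l−1}_k,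 ρ̂^l_k) − 𝔣(ρ̂^l_k, ρ̂^{l+1}_k)) − K_{k+1}(l,1)·η^1_k − K_{k+1}(l,2)·η^n_k, where the gain matrices satisfy ‖K_{k+1}‖_∞ ≤ 𝔨(Γ) (maximum absolute row-sum norm). Then, with c_0 = max{1, (č_2/č_1)^{1/2}·r_2·q_1^{−1}} and 𝔠(Γ) = c_0·Δx·𝔨(Γ)/(Δt·min{v_m, w}), the error satisfies ‖η_k‖ < 𝔥(ε, Γ) = √n·(ϱ_m + ε·(c_0 + (n−2)·𝔠(Γ))) for all k with k̲ < k ≤ k̄. -/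

import Mathlib

open Matrix Filter Finset

noncomputable section

/-- Loewner strict order `A < B`. -/
def loewnerLT {m : Type*} [Fintype m] (A B : Matrix m m ℝ) : Prop := (B - A).PosDef

/-- Loewner order `A ≤ B`. -/
def loewnerLE {m : Type*} [Fintype m] (A B : Matrix m m ℝ) : Prop := (B - A).PosSemidef

/-- smallest (real) eigenvalue of a matrix -/
def lamMin {N : ℕ} (M : Matrix (Fin N) (Fin N) ℝ) : ℝ :=
  sInf {t : ℝ | ∃ v : Fin N → ℝ, v ≠ 0 ∧ M.mulVec v = t • v}

/-- largest (real) eigenvalue of a matrix -/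
def lamMax {N : ℕ} (M : Matrix (Fin N) (Fin N) ℝ) : ℝ :=
  sSup {t : ℝ | ∃ v : Fin N → ℝ, v ≠ 0 ∧ M.mulVec v = t • v}

/-- spectral norm (ℓ²-operator norm) of a square matrix -/
def matSpecNormL2 {N : ℕ} (M : Matrix (Fin N) (Fin N) ℝ) : ℝ :=
  ‖Matrix.toEuclideanCLM (𝕜 := ℝ) M‖

/-- largest singular value -/
def sigmaMax {N : ℕ} (M : Matrix (Fin N) (Fin N) ℝ) : ℝ := matSpecNormL2 M

/-- maximum absolute row-sum matrix norm -/
def rowSumNorm {m n : ℕ} (M : Matrix (Fin m) (Fin n) ℝ) : ℝ :=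
  ⨆ i : Fin m, ∑ j, |M i j|

/-- Euclidean norm of a vector -/
def euclNorm {N : ℕ} (v : Fin N → ℝ) : ℝ := Real.sqrt (∑ j, (v j) ^ 2)

/-- the free-flow mode matrix A_FF -/
def matAFF (N : ℕ) (θv : ℝ) : Matrix (Fin N) (Fin N) ℝ :=
  Matrix.of fun i j =>
    if (i : ℕ) = 0 ∧ (j : ℕ) = 0 then 1
    else if i = j then 1 - θv
    else if (i : ℕ) = (j : ℕ) + 1 then θv
    else 0

/-- the congestion mode matrix A_CC -/
def matACC (N : ℕ) (θw : ℝ) : Matrix (Fin N) (Fin N) ℝ :=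
  Matrix.of fun i j =>
    if (i : ℕ) = N - 1 ∧ (j : ℕ) = N - 1 then 1
    else if i = j then 1 - θw
    else if (j : ℕ) = (i : ℕ) + 1 then θw
    else 0

/-- the congestion–freeflow mode matrix A_CF^s = diag(Δ_s, Θ_{N−s}) -/
def matACF (N s : ℕ) (θv θw : ℝ) : Matrix (Fin N) (Fin N) ℝ :=
  Matrix.of fun i j =>
    if (i : ℕ) < s ∧ (j : ℕ) < s then
      (if i = j then 1 - θw else if (j : ℕ) = (i : ℕ) + 1 then θw else 0)
    else if s ≤ (i : ℕ) ∧ s ≤ (j : ℕ) then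
      (if i = j then 1 - θv else if (i : ℕ) = (j : ℕ) + 1 then θv else 0)
    else 0

/-- set of observable-mode state transition matrices 𝒜_O -/
def setAO (N : ℕ) (θv θw : ℝ) : Set (Matrix (Fin N) (Fin N) ℝ) :=
  {matAFF N θv, matACC N θw} ∪ {M | ∃ s, 1 ≤ s ∧ s ≤ N - 1 ∧ M = matACF N s θv θw}

/-- boundary output matrix H_b, rows e_1ᵀ and e_nᵀ -/
def matHb (N : ℕ) : Matrix (Fin 2) (Fin N) ℝ :=
  Matrix.of fun i j =>
    if (i : ℕ) = 0 ∧ (j : ℕ) = 0 then 1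
    else if (i : ℕ) = 1 ∧ (j : ℕ) = N - 1 then 1
    else 0

/-- standing assumption on output matrices: pairwise distinct standard basis rows,
including e_1ᵀ and e_nᵀ -/
def standingH {mk N : ℕ} (H : Matrix (Fin mk) (Fin N) ℝ) : Prop :=
  (∀ p : Fin mk, ∃ l : Fin N, H p = fun j => if j = l then 1 else 0) ∧
  (∀ p q : Fin mk, H p = H q → p = q) ∧
  (∃ p : Fin mk, H p = fun j : Fin N => if (j : ℕ) = 0 then 1 else 0) ∧
  (∃ p : Fin mk, H p = fun j : Fin N => if (j : ℕ) = N - 1 then 1 else 0)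

/-- ascending product of inverses  M_lo⁻¹ · M_{lo+1}⁻¹ ⋯ M_hi⁻¹ -/
def prodInvAsc {N : ℕ} (M : ℕ → Matrix (Fin N) (Fin N) ℝ) (lo hi : ℕ) :
    Matrix (Fin N) (Fin N) ℝ :=
  ((List.range (hi + 1 - lo)).map (fun t => (M (lo + t))⁻¹)).prod

/-- descending product  M_hi · M_{hi−1} ⋯ M_lo -/
def prodDesc {N : ℕ} (M : ℕ → Matrix (Fin N) (Fin N) ℝ) (hi lo : ℕ) :
    Matrix (Fin N) (Fin N) ℝ :=
  ((List.range (hi + 1 - lo)).map (fun t => M (hi - t))).prod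

/-- a_𝓘 -/
def aI (N : ℕ) (θv θw r2 : ℝ) : ℝ :=
  r2⁻¹ * sInf {t : ℝ | ∃ M : ℕ → Matrix (Fin N) (Fin N) ℝ,
    (∀ ι, 1 ≤ ι → ι ≤ max 1 (N - 2) → M ι ∈ setAO N θv θw) ∧
    t = lamMin ((matHb N)ᵀ * matHb N +
      ∑ ι ∈ Finset.Icc 1 (max 1 (N - 2)),
        (prodInvAsc M ι (max 1 (N - 2)))ᵀ * (matHb N)ᵀ * matHb N *
          prodInvAsc M ι (max 1 (N - 2)))}

/-- b_𝓘 -/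
def bI (N : ℕ) (θv θw r1 : ℝ) : ℝ :=
  r1⁻¹ * sSup {t : ℝ | ∃ M : ℕ → Matrix (Fin N) (Fin N) ℝ,
    (∀ ι, 1 ≤ ι → ι ≤ max 1 (N - 2) → M ι ∈ setAO N θv θw) ∧
    t = lamMax (1 +
      ∑ ι ∈ Finset.Icc 1 (max 1 (N - 2)),
        (prodInvAsc M ι (max 1 (N - 2)))ᵀ * prodInvAsc M ι (max 1 (N - 2)))}

/-- a_𝓒 -/
def aC (N : ℕ) (θv θw q1 : ℝ) : ℝ :=
  q1 * sInf {t : ℝ | ∃ M : ℕ → Matrix (Fin N) (Fin N) ℝ,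
    (∀ ι, 1 ≤ ι → ι ≤ max 1 (N - 2) → M ι ∈ setAO N θv θw) ∧
    t = lamMin (1 +
      ∑ ι ∈ Finset.Icc 1 (max 1 (N - 2) - 1),
        prodDesc M (max 1 (N - 2) - 1) ι * (prodDesc M (max 1 (N - 2) - 1) ι)ᵀ)}

/-- b_𝓒 -/
def bC (N : ℕ) (θv θw q2 : ℝ) : ℝ :=
  q2 * sSup {t : ℝ | ∃ M : ℕ → Matrix (Fin N) (Fin N) ℝ,
    (∀ ι, 1 ≤ ι → ι ≤ max 1 (N - 2) → M ι ∈ setAO N θv θw) ∧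
    t = lamMax (1 +
      ∑ ι ∈ Finset.Icc 1 (max 1 (N - 2) - 1),
        prodDesc M (max 1 (N - 2) - 1) ι * (prodDesc M (max 1 (N - 2) - 1) ι)ᵀ)}

/-- constant c₁ -/
def cLow (N : ℕ) (θv θw q1 q2 r1 r2 : ℝ) : ℝ :=
  min (aI N θv θw r2) (aC N θv θw q1) /
    (1 + min (aI N θv θw r2) (aC N θv θw q1) * max (bI N θv θw r1) (bC N θv θw q2))

/-- constant c₂ -/
def cHigh (N : ℕ) (θv θw q1 q2 r1 r2 : ℝ) : ℝ :=
  (1 + min (aI N θv θw r2) (aC N θv θw q1) * max (bI N θv θw r1) (bC N θv θw q2)) /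
    min (aI N θv θw r2) (aC N θv θw q1)


/-- the explicit Kalman-gain bound `𝔨(M)` of Lemma 4 -/
def frakK (N : ℕ) (Δt Δx vm w q1 q2 r1 r2 : ℝ) (M : Matrix (Fin N) (Fin N) ℝ) : ℝ :=
  let ca : ℝ := min (2 * r2⁻¹) q1
  let cb : ℝ := max (2 * r1⁻¹) q2
  let c1 : ℝ := ca / (1 + ca * cb)
  let c2 : ℝ := (1 + ca * cb) / ca
  let c3 : ℝ := c1⁻¹ + q1⁻¹ * (c1⁻¹) ^ 2
  let tbar : ℝ := Real.sqrt 2 * ((N : ℝ) - 2) * Real.sqrt (c2 / c1)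
  let qbar : ℝ := Real.sqrt (1 - c3 * c2⁻¹)
  let pbar : ℝ := 2 * r2 * q1⁻¹ * (Δt / Δx) * max vm w * (r2 + q2) + q2
  let gbar : ℝ :=
    (N : ℝ) * Real.sqrt N * matSpecNormL2 M * (1 + (Δt / Δx) * (w + vm)) ^ 2 +
    (N : ℝ) * Real.sqrt N * q2 * (1 + (Δt / Δx) * (w + vm)) + Real.sqrt N * q2
  Real.sqrt 2 * r1⁻¹ *
    max (max (max (Real.sqrt N * (matSpecNormL2 M * (1 + (Δt / Δx) * (w + vm)) + q2))
      (Real.sqrt 2 * (r2 + q2))) (max (2 * gbar) (2 * (tbar * qbar * gbar + pbar))))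
      (2 * (tbar * pbar * qbar / (1 - qbar) + pbar))

/-- Godunov numerical flux for the triangular fundamental diagram. -/
def gflux (vm w ϱm qm a b : ℝ) : ℝ := min (vm * a) (min (w * (ϱm - b)) qm)

/-- the constant `c₀ = max{1, (č₂/č₁)^{1/2}·r₂·q₁⁻¹}` -/
def cZero (q1 q2 r1 r2 : ℝ) : ℝ :=
  let ca : ℝ := min (2 * r2⁻¹) q1
  let cb : ℝ := max (2 * r1⁻¹) q2
  max 1 (Real.sqrt (((1 + ca * cb) / ca) / (ca / (1 + ca * cb))) * r2 * q1⁻¹)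

/-- the function `𝔠(Γ) = c₀·Δx·𝔨(Γ)/(Δt·min{v_m,w})` -/
def frakCc (N : ℕ) (Δt Δx vm w q1 q2 r1 r2 : ℝ) (M : Matrix (Fin N) (Fin N) ℝ) : ℝ :=
  cZero q1 q2 r1 r2 * Δx * frakK N Δt Δx vm w q1 q2 r1 r2 M / (Δt * min vm w)

/-!
The boundary error pair follows the Kalman error recursion. In information form the update reads
`Γ⁺⁻¹ = P⁻¹ + R⁻¹` with prior `P = Γ + Q`, so `Γ⁺ ≤ R ≤ r₂`, and the energy `ηᵀΓ⁻¹η` satisfies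
`η⁺ᵀΓ⁺⁻¹η⁺ = ηᵀP⁻¹η - ηᵀ(P + R)⁻¹η ≤ min (ηᵀΓ⁻¹η) (q₁⁻¹‖η‖²)`. Hence for `k > k̲`
`‖η̌_k‖² ≤ r₂ η̌_kᵀΓ_k⁻¹η̌_k ≤ (r₂/q₁) ‖η̌_{k̲}‖² < B²`, where `B = c₀ ε` and `r₂/q₁ ≤ c₀ ≤ c₀²`.

In the interior the Godunov scheme is monotone under the CFL condition, so the band
`-(B + l θ) ≤ ρ̂ˡ ≤ ϱ_m + B + (n - 1 - l) θ` with `θ = ε 𝔠(Γ)` is invariant: at the corners of the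
band the scheme moves inwards by `λ v_m θ` resp. `λ w θ`, which dominates the gain correction
`|K(l,1) η¹ + K(l,2) ηⁿ| ≤ 𝔨(Γ) B = λ min{v_m, w} θ`. On the band `|ηˡ| ≤ ϱ_m + B + (n - 2) θ`.
-/

lemma min_sub_min_le_sub {α : Type*} [AddCommGroup α] [LinearOrder α] [IsOrderedAddMonoid α]
    {x y : α} (c : α) (h : x ≤ y) : min y c - min x c ≤ y - x := by
  rcases le_total y c with hy | hy
  · rw [min_eq_left hy, min_eq_left (h.trans hy)]
  · rw [min_eq_right hy]
    rcases le_total x c with hx | hx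
    · rw [min_eq_left hx]; exact sub_le_sub_right hy x
    · rw [min_eq_right hx, sub_self, sub_nonneg]; exact h

lemma abs_mul_add_mul_le {a b x y B : ℝ} (hx : |x| ≤ B) (hy : |y| ≤ B) :
    |a * x + b * y| ≤ (|a| + |b|) * B := by
  calc |a * x + b * y| ≤ |a| * |x| + |b| * |y| := by
        simpa only [abs_mul] using abs_add_le (a * x) (b * y)
    _ ≤ (|a| + |b|) * B := by
        rw [add_mul]; gcongr

lemma sq_add_sq_lt_of_sqrt_sum_sq_lt {x : ℕ → ℝ} {n : ℕ} {ε : ℝ} (hn : 2 ≤ n)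
    (h : √(∑ l ∈ range n, x l ^ 2) < ε) : x 0 ^ 2 + x (n - 1) ^ 2 < ε ^ 2 := by
  have hsub : {0, n - 1} ⊆ range n := by
    intro l
    simp only [mem_insert, mem_singleton, mem_range]
    omega
  rw [← sum_pair (f := fun l => x l ^ 2) (show 0 ≠ n - 1 by omega)]
  exact (sum_le_sum_of_subset_of_nonneg hsub fun _ _ _ => sq_nonneg _).trans_lt
    ((Real.sqrt_lt' ((Real.sqrt_nonneg _).trans_lt h)).mp h)

lemma abs_lt_of_sqrt_sum_sq_lt {x : ℕ → ℝ} {n l : ℕ} {ε : ℝ} (hl : l < n)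
    (h : √(∑ i ∈ range n, x i ^ 2) < ε) : |x l| < ε := by
  have hε := (Real.sqrt_nonneg _).trans_lt h
  exact abs_lt_of_sq_lt_sq ((single_le_sum (fun i _ => sq_nonneg (x i)) (mem_range.mpr hl)).trans_lt
    ((Real.sqrt_lt' hε).mp h)) hε.le

lemma sqrt_sum_sq_lt {x : ℕ → ℝ} {n j : ℕ} {h : ℝ} (hj : j < n) (hle : ∀ l < n, |x l| ≤ h)
    (hlt : |x j| < h) : √(∑ l ∈ range n, x l ^ 2) < √n * h := by
  have hh : 0 < h := (abs_nonneg _).trans_lt hlt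
  have hsum : ∑ l ∈ range n, x l ^ 2 < n * h ^ 2 := by
    calc ∑ l ∈ range n, x l ^ 2 < ∑ _l ∈ range n, h ^ 2 :=
          sum_lt_sum (fun l hl => sq_le_sq' (abs_le.mp (hle l (mem_range.mp hl))).1
            (abs_le.mp (hle l (mem_range.mp hl))).2)
            ⟨j, mem_range.mpr hj, sq_lt_sq' (abs_lt.mp hlt).1 (abs_lt.mp hlt).2⟩
      _ = n * h ^ 2 := by simp
  calc √(∑ l ∈ range n, x l ^ 2) < √(n * h ^ 2) := Real.sqrt_lt_sqrt (by positivity) hsum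
    _ = √n * h := by rw [Real.sqrt_mul n.cast_nonneg, Real.sqrt_sq hh.le]

open scoped MatrixOrder

namespace Matrix

variable {m : Type*} [Fintype m] {A B : Matrix m m ℝ}

lemma dotProduct_mulVec_le_of_le (h : A ≤ B) (v : m → ℝ) :
    v ⬝ᵥ (A *ᵥ v) ≤ v ⬝ᵥ (B *ᵥ v) := by
  simpa [sub_mulVec] using (le_iff.mp h).dotProduct_mulVec_nonneg v

lemma IsHermitian.dotProduct_mulVec_comm (hA : A.IsHermitian) (u v : m → ℝ) :
    u ⬝ᵥ (A *ᵥ v) = v ⬝ᵥ (A *ᵥ u) := by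
  rw [dotProduct_mulVec, ← mulVec_transpose, (isHermitian_iff_isSymm.mp hA).eq, dotProduct_comm]

variable [DecidableEq m]

lemma PosDef.mulVec_inv_mulVec (hA : A.PosDef) (v : m → ℝ) : A *ᵥ (A⁻¹ *ᵥ v) = v := by
  rw [mulVec_mulVec, mul_nonsing_inv _ ((isUnit_iff_isUnit_det A).mp hA.isUnit), one_mulVec]

/-- `vᵀA⁻¹v = max_u (2 uᵀv - uᵀAu)`, attained at `u = A⁻¹v`: this makes `A ↦ A⁻¹` antitone. -/
lemma PosDef.two_mul_dotProduct_sub_le (hA : A.PosDef) (u v : m → ℝ) :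
    2 * (u ⬝ᵥ v) - u ⬝ᵥ (A *ᵥ u) ≤ v ⬝ᵥ (A⁻¹ *ᵥ v) := by
  have h := hA.posSemidef.dotProduct_mulVec_nonneg (u - A⁻¹ *ᵥ v)
  rw [star_trivial, mulVec_sub, hA.mulVec_inv_mulVec, dotProduct_sub, sub_dotProduct,
    sub_dotProduct, hA.isHermitian.dotProduct_mulVec_comm (A⁻¹ *ᵥ v) u, hA.mulVec_inv_mulVec,
    dotProduct_comm (A⁻¹ *ᵥ v) v] at h
  linarith

lemma PosDef.inv_anti (hA : A.PosDef) (hAB : A ≤ B) : B⁻¹ ≤ A⁻¹ := by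
  have hB : B.PosDef := by simpa using hA.add_posSemidef (le_iff.mp hAB)
  refine le_iff.mpr <| PosSemidef.of_dotProduct_mulVec_nonneg
    (hA.inv.isHermitian.sub hB.inv.isHermitian) fun v => ?_
  have hBv : v ⬝ᵥ (B⁻¹ *ᵥ v) =
      2 * ((B⁻¹ *ᵥ v) ⬝ᵥ v) - (B⁻¹ *ᵥ v) ⬝ᵥ (B *ᵥ (B⁻¹ *ᵥ v)) := by
    rw [hB.mulVec_inv_mulVec, dotProduct_comm (B⁻¹ *ᵥ v) v]
    ring
  rw [star_trivial, sub_mulVec, dotProduct_sub, sub_nonneg, hBv]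
  exact (sub_le_sub_left (dotProduct_mulVec_le_of_le hAB _) _).trans
    (hA.two_mul_dotProduct_sub_le _ _)

lemma inv_smul_one {c : ℝ} (hc : c ≠ 0) : (c • (1 : Matrix m m ℝ))⁻¹ = c⁻¹ • 1 :=
  inv_eq_left_inv (by simp [smul_smul, hc])

lemma dotProduct_smul_one_mulVec (c : ℝ) (v : m → ℝ) :
    v ⬝ᵥ ((c • (1 : Matrix m m ℝ)) *ᵥ v) = c * (v ⬝ᵥ v) := by
  simp [smul_mulVec]

lemma dotProduct_inv_mulVec_le_of_smul_one_le {c : ℝ} (hc : 0 < c) (h : c • 1 ≤ A)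
    (v : m → ℝ) : v ⬝ᵥ (A⁻¹ *ᵥ v) ≤ c⁻¹ * (v ⬝ᵥ v) := by
  simpa [inv_smul_one hc.ne', dotProduct_smul_one_mulVec] using
    dotProduct_mulVec_le_of_le ((PosDef.one.smul hc).inv_anti h) v

lemma inv_mul_dotProduct_le_of_le_smul_one (hA : A.PosDef) {c : ℝ} (hc : 0 < c)
    (h : A ≤ c • 1) (v : m → ℝ) : c⁻¹ * (v ⬝ᵥ v) ≤ v ⬝ᵥ (A⁻¹ *ᵥ v) := by
  simpa [inv_smul_one hc.ne', dotProduct_smul_one_mulVec] using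
    dotProduct_mulVec_le_of_le (hA.inv_anti h) v

end Matrix

section KalmanFilter

variable {m : Type*} [Fintype m]

lemma loewnerLT.le {A B : Matrix m m ℝ} (h : loewnerLT A B) : A ≤ B := h.posSemidef

variable [DecidableEq m]

lemma loewnerLT.posDef_of_smul_one {R : Matrix m m ℝ} {r : ℝ} (hr : 0 < r)
    (h : loewnerLT (r • 1) R) : R.PosDef := by
  simpa using h.add (PosDef.one.smul hr)

def kalmanGain (P R : Matrix m m ℝ) : Matrix m m ℝ := P * (P + R)⁻¹

def kalmanPosterior (P R : Matrix m m ℝ) : Matrix m m ℝ := P - kalmanGain P R * P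

variable {P R : Matrix m m ℝ}

lemma inv_add_inv_mul_one_sub_kalmanGain (hP : P.PosDef) (hR : R.PosDef) :
    (P⁻¹ + R⁻¹) * (1 - kalmanGain P R) = P⁻¹ := by
  have hPR : (P⁻¹ + R⁻¹) * P = R⁻¹ * (P + R) := by
    rw [add_mul, mul_add, nonsing_inv_mul _ ((isUnit_iff_isUnit_det P).mp hP.isUnit),
      nonsing_inv_mul _ ((isUnit_iff_isUnit_det R).mp hR.isUnit), add_comm]
  rw [kalmanGain, mul_sub, mul_one, ← mul_assoc, hPR, mul_assoc,
    mul_nonsing_inv _ ((isUnit_iff_isUnit_det _).mp (hP.add hR).isUnit), mul_one,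
    add_sub_cancel_right]

lemma kalmanPosterior_eq_inv (hP : P.PosDef) (hR : R.PosDef) :
    kalmanPosterior P R = (P⁻¹ + R⁻¹)⁻¹ := by
  refine (inv_eq_right_inv ?_).symm
  rw [kalmanPosterior, ← one_sub_mul, ← mul_assoc, inv_add_inv_mul_one_sub_kalmanGain hP hR,
    nonsing_inv_mul _ ((isUnit_iff_isUnit_det P).mp hP.isUnit)]

lemma kalmanPosterior_posDef (hP : P.PosDef) (hR : R.PosDef) : (kalmanPosterior P R).PosDef := by
  rw [kalmanPosterior_eq_inv hP hR]
  exact (hP.inv.add hR.inv).inv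

lemma kalmanPosterior_le (hP : P.PosDef) (hR : R.PosDef) : kalmanPosterior P R ≤ R := by
  rw [kalmanPosterior_eq_inv hP hR]
  simpa [nonsing_inv_nonsing_inv _ ((isUnit_iff_isUnit_det R).mp hR.isUnit)] using
    hR.inv.inv_anti (le_add_of_nonneg_left hP.inv.posSemidef.nonneg)

lemma dotProduct_kalmanPosterior_inv_mulVec (hP : P.PosDef) (hR : R.PosDef) (η : m → ℝ) :
    ((1 - kalmanGain P R) *ᵥ η) ⬝ᵥ ((kalmanPosterior P R)⁻¹ *ᵥ ((1 - kalmanGain P R) *ᵥ η)) =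
      η ⬝ᵥ (P⁻¹ *ᵥ η) - η ⬝ᵥ ((P + R)⁻¹ *ᵥ η) := by
  rw [kalmanPosterior_eq_inv hP hR,
    nonsing_inv_nonsing_inv _ ((isUnit_iff_isUnit_det _).mp (hP.inv.add hR.inv).isUnit),
    mulVec_mulVec, inv_add_inv_mul_one_sub_kalmanGain hP hR, sub_mulVec, one_mulVec,
    sub_dotProduct, kalmanGain, ← mulVec_mulVec, dotProduct_comm (P *ᵥ _),
    hP.isHermitian.dotProduct_mulVec_comm, hP.mulVec_inv_mulVec,
    dotProduct_comm ((P + R)⁻¹ *ᵥ η)]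

lemma kalman_step {Γ Q : Matrix m m ℝ} {q : ℝ} (hq : 0 < q) (hΓ : Γ.PosDef) (hQ : q • 1 ≤ Q)
    (hR : R.PosDef) (hP : P = Γ + Q) (η : m → ℝ) :
    (kalmanPosterior P R).PosDef ∧ kalmanPosterior P R ≤ R ∧
      ((1 - kalmanGain P R) *ᵥ η) ⬝ᵥ ((kalmanPosterior P R)⁻¹ *ᵥ ((1 - kalmanGain P R) *ᵥ η)) ≤
        min (η ⬝ᵥ (Γ⁻¹ *ᵥ η)) (q⁻¹ * (η ⬝ᵥ η)) := by
  have hQ0 : 0 ≤ Q := (PosDef.one.smul hq).posSemidef.nonneg.trans hQ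
  have hPpd : P.PosDef := hP ▸ hΓ.add_posSemidef hQ0.posSemidef
  refine ⟨kalmanPosterior_posDef hPpd hR, kalmanPosterior_le hPpd hR, ?_⟩
  rw [dotProduct_kalmanPosterior_inv_mulVec hPpd hR]
  refine (sub_le_self _ ((hPpd.add hR).inv.posSemidef.dotProduct_mulVec_nonneg η)).trans
    (le_min ?_ ?_)
  · exact dotProduct_mulVec_le_of_le (hΓ.inv_anti (hP ▸ le_add_of_nonneg_right hQ0)) η
  · exact dotProduct_inv_mulVec_le_of_smul_one_le hq
      (hP ▸ hQ.trans (le_add_of_nonneg_left hΓ.posSemidef.nonneg)) η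

theorem kalman_error_sq_le {q r : ℝ} (hq : 0 < q) (hr : 0 < r) (kl : ℕ) (kbar : ℕ∞)
    (Γ P K Q R : ℕ → Matrix m m ℝ)
    (hQ : ∀ k, kl ≤ k → (k : ℕ∞) < kbar → q • 1 ≤ Q k)
    (hR : ∀ k, kl < k → (k : ℕ∞) ≤ kbar → (R k).PosDef ∧ R k ≤ r • 1)
    (hΓ0 : (Γ kl).PosDef)
    (hP : ∀ k, kl ≤ k → (k : ℕ∞) < kbar → P (k + 1) = Γ k + Q k)
    (hK : ∀ k, kl ≤ k → (k : ℕ∞) < kbar → K (k + 1) = kalmanGain (P (k + 1)) (R (k + 1)))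
    (hΓ : ∀ k, kl ≤ k → (k : ℕ∞) < kbar → Γ (k + 1) = P (k + 1) - K (k + 1) * P (k + 1))
    (η : ℕ → m → ℝ)
    (hη : ∀ k, kl ≤ k → (k : ℕ∞) < kbar → η (k + 1) = (1 - K (k + 1)) *ᵥ η k) :
    ∀ k, kl < k → (k : ℕ∞) ≤ kbar → η k ⬝ᵥ η k ≤ r / q * (η kl ⬝ᵥ η kl) := by
  have energy : ∀ k, kl ≤ k → (k : ℕ∞) ≤ kbar → (Γ k).PosDef ∧
      (kl < k → Γ k ≤ r • 1 ∧ η k ⬝ᵥ ((Γ k)⁻¹ *ᵥ η k) ≤ q⁻¹ * (η kl ⬝ᵥ η kl)) := by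
    intro k hk
    induction k, hk using Nat.le_induction with
    | base => exact fun _ => ⟨hΓ0, fun h => absurd h (lt_irrefl kl)⟩
    | succ k hk ih =>
      intro hkb
      have hk' : (k : ℕ∞) < kbar := (Nat.cast_lt.mpr k.lt_succ_self).trans_le hkb
      obtain ⟨hΓk, hV⟩ := ih hk'.le
      obtain ⟨hRpd, hRr⟩ := hR (k + 1) (Nat.lt_succ_of_le hk) hkb
      obtain ⟨hpd, hle, hV'⟩ := kalman_step hq hΓk (hQ k hk hk') hRpd (hP k hk hk') (η k)
      simp only [kalmanPosterior, ← hK k hk hk', ← hΓ k hk hk', ← hη k hk hk'] at hpd hle hV'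
      refine ⟨hpd, fun _ => ⟨hle.trans hRr, ?_⟩⟩
      rcases hk.eq_or_lt with rfl | hlt
      · exact hV'.trans (min_le_right _ _)
      · exact hV'.trans ((min_le_left _ _).trans (hV hlt).2)
  intro k hk hkb
  obtain ⟨hΓk, hV⟩ := energy k hk.le hkb
  obtain ⟨hΓr, hVk⟩ := hV hk
  have := (inv_mul_le_iff₀ hr).mp (inv_mul_dotProduct_le_of_le_smul_one hΓk hr hΓr (η k))
  calc η k ⬝ᵥ η k ≤ r * (q⁻¹ * (η kl ⬝ᵥ η kl)) := this.trans (by gcongr)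
    _ = r / q * (η kl ⬝ᵥ η kl) := by ring

end KalmanFilter

lemma div_le_cZero {q1 q2 r1 r2 : ℝ} (hq0 : 0 < q1) (hq : q1 ≤ q2) (hr2 : 0 < r2) :
    r2 / q1 ≤ cZero q1 q2 r1 r2 := by
  set a := min (2 * r2⁻¹) q1
  set b := max (2 * r1⁻¹) q2
  have ha : 0 < a := lt_min (by positivity) hq0
  have hab : a ≤ b := (min_le_right _ _).trans (hq.trans (le_max_right _ _))
  have hx : 1 ≤ (1 + a * b) / a := by
    rw [le_div_iff₀ ha]; nlinarith [sq_nonneg (a - 1)]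
  have hsqrt : 1 ≤ √(((1 + a * b) / a) / (a / (1 + a * b))) := by
    rw [← inv_div (1 + a * b) a, div_inv_eq_mul, Real.one_le_sqrt]
    exact one_le_mul_of_one_le_of_one_le hx hx
  calc r2 / q1 ≤ √(((1 + a * b) / a) / (a / (1 + a * b))) * r2 * q1⁻¹ := by
        rw [mul_assoc, ← div_eq_mul_inv]
        exact le_mul_of_one_le_left (by positivity) hsqrt
    _ ≤ cZero q1 q2 r1 r2 := le_max_right _ _

theorem boundary_error_lt {q1 q2 r1 r2 ε : ℝ} (hq0 : 0 < q1) (hq : q1 < q2) (hr0 : 0 < r1)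
    (hr : r1 < r2) (hε : 0 ≤ ε) (kl : ℕ) (kbar : ℕ∞)
    (Γcpost Γcprior Kc Qc Rc : ℕ → Matrix (Fin 2) (Fin 2) ℝ)
    (hQc : ∀ k, kl ≤ k → (k : ℕ∞) < kbar →
      loewnerLT (q1 • 1) (Qc k) ∧ loewnerLT (Qc k) (q2 • 1))
    (hRc : ∀ k, kl < k → (k : ℕ∞) ≤ kbar →
      loewnerLT (r1 • 1) (Rc k) ∧ loewnerLT (Rc k) (r2 • 1))
    (hΓc0 : (Γcpost kl).PosDef)
    (hcprior : ∀ k, kl ≤ k → (k : ℕ∞) < kbar → Γcprior (k + 1) = Γcpost k + Qc k)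
    (hKc : ∀ k, kl ≤ k → (k : ℕ∞) < kbar →
      Kc (k + 1) = Γcprior (k + 1) * (Γcprior (k + 1) + Rc (k + 1))⁻¹)
    (hcpost : ∀ k, kl ≤ k → (k : ℕ∞) < kbar →
      Γcpost (k + 1) = Γcprior (k + 1) - Kc (k + 1) * Γcprior (k + 1))
    (x y : ℕ → ℝ) (hxy : ∀ k, kl ≤ k → (k : ℕ∞) < kbar →
      ![x (k + 1), y (k + 1)] = (1 - Kc (k + 1)).mulVec ![x k, y k])
    (hinit : x kl ^ 2 + y kl ^ 2 < ε ^ 2) :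
    ∀ k, kl < k → (k : ℕ∞) ≤ kbar →
      |x k| < cZero q1 q2 r1 r2 * ε ∧ |y k| < cZero q1 q2 r1 r2 * ε := by
  intro k hk hkb
  have hr2 : 0 < r2 := hr0.trans hr
  have hc0 : r2 / q1 ≤ cZero q1 q2 r1 r2 ^ 2 :=
    (div_le_cZero hq0 hq.le hr2).trans (le_self_pow₀ (le_max_left _ _) two_ne_zero)
  have hkal := kalman_error_sq_le hq0 hr2 kl kbar Γcpost Γcprior Kc Qc Rc
    (fun k h₁ h₂ => (hQc k h₁ h₂).1.le)
    (fun k h₁ h₂ => ⟨(hRc k h₁ h₂).1.posDef_of_smul_one hr0, (hRc k h₁ h₂).2.le⟩)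
    hΓc0 hcprior hKc hcpost (fun k => ![x k, y k]) hxy k hk hkb
  simp only [dotProduct, Fin.sum_univ_two, Matrix.cons_val_zero, Matrix.cons_val_one, ← sq]
    at hkal
  have hsq : x k ^ 2 + y k ^ 2 < (cZero q1 q2 r1 r2 * ε) ^ 2 := by
    calc x k ^ 2 + y k ^ 2 ≤ r2 / q1 * (x kl ^ 2 + y kl ^ 2) := hkal
      _ < r2 / q1 * ε ^ 2 := by gcongr
      _ ≤ (cZero q1 q2 r1 r2 * ε) ^ 2 := by rw [mul_pow]; gcongr
  have hB : 0 ≤ cZero q1 q2 r1 r2 * ε := mul_nonneg (zero_le_one.trans (le_max_left _ _)) hε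
  exact ⟨abs_lt_of_sq_lt_sq (by nlinarith) hB, abs_lt_of_sq_lt_sq (by nlinarith) hB⟩

def estimateBand (n ϱm B θ l : ℝ) : Set ℝ := Set.Icc (-(B + l * θ)) (ϱm + B + (n - 1 - l) * θ)

lemma mem_estimateBand_of_abs_sub_le {n ϱm B θ l x ρ : ℝ} (hθ : 0 ≤ θ) (hl0 : 0 ≤ l)
    (hln : l + 1 ≤ n) (hρ : ρ ∈ Set.Icc 0 ϱm) (h : |x - ρ| ≤ B) : x ∈ estimateBand n ϱm B θ l := by
  obtain ⟨h₁, h₂⟩ := abs_le.mp h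
  constructor <;> nlinarith [hρ.1, hρ.2]

lemma abs_sub_le_of_mem_estimateBand {n ϱm B θ l x ρ : ℝ} (hθ : 0 ≤ θ) (hl1 : 1 ≤ l)
    (hln : l + 2 ≤ n) (hρ : ρ ∈ Set.Icc 0 ϱm) (hx : x ∈ estimateBand n ϱm B θ l) :
    |x - ρ| ≤ ϱm + B + (n - 2) * θ := by
  obtain ⟨h₁, h₂⟩ := hx
  rw [abs_le]
  constructor <;> nlinarith [hρ.1, hρ.2]

section Godunov

variable {vm w ϱm ϱc qm lam : ℝ}

def godunovStep (vm w ϱm qm lam a b c : ℝ) : ℝ :=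
  b + lam * (gflux vm w ϱm qm a b - gflux vm w ϱm qm b c)

lemma gflux_mono_left (hv : 0 ≤ vm) (b : ℝ) : Monotone fun a => gflux vm w ϱm qm a b :=
  fun _ _ h => min_le_min_right _ (mul_le_mul_of_nonneg_left h hv)

lemma gflux_anti_right (hw : 0 ≤ w) (a : ℝ) : Antitone fun b => gflux vm w ϱm qm a b :=
  fun _ _ h => min_le_min_left _ (min_le_min_right _ (mul_le_mul_of_nonneg_left (by linarith) hw))

/-- Free flow `b ≤ ϱc` and congestion `ϱc ≤ b` are treated separately: the supply
`min (w (ϱm - b)) qm` is constant on the first piece and the demand `min (vm b) qm` on the second,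
because `qm = vm ϱc = w (ϱm - ϱc)`. -/
lemma godunovStep_mono_center (hv : 0 ≤ vm) (hw : 0 ≤ w) (hqv : qm = vm * ϱc)
    (hqw : qm = w * (ϱm - ϱc)) (hlam : 0 ≤ lam) (hlv : lam * vm ≤ 1) (hlw : lam * w ≤ 1)
    (a c : ℝ) : Monotone fun b => godunovStep vm w ϱm qm lam a b c := by
  refine MonotoneOn.Iic_union_Ici (a := ϱc) (fun b₁ h₁ b₂ h₂ h => ?_) (fun b₁ h₁ b₂ h₂ h => ?_)
  · have supply : ∀ b ≤ ϱc, min (w * (ϱm - b)) qm = qm := fun b hb =>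
      min_eq_right (hqw ▸ mul_le_mul_of_nonneg_left (by linarith) hw)
    have := min_sub_min_le_sub (min (w * (ϱm - c)) qm) (mul_le_mul_of_nonneg_left h hv)
    simp only [godunovStep, gflux, supply b₁ h₁, supply b₂ h₂]
    nlinarith
  · have demand : ∀ b, ϱc ≤ b → min (vm * b) (min (w * (ϱm - c)) qm) = min (w * (ϱm - c)) qm :=
      fun b hb => min_eq_right ((min_le_right _ _).trans (hqv ▸ mul_le_mul_of_nonneg_left hb hv))
    have := min_sub_min_le_sub (min (vm * a) qm)
      (mul_le_mul_of_nonneg_left (sub_le_sub_left h ϱm) hw)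
    simp only [godunovStep, gflux, demand b₁ h₁, demand b₂ h₂, min_left_comm (vm * a)]
    nlinarith

lemma godunovStep_mono (hv : 0 ≤ vm) (hw : 0 ≤ w) (hqv : qm = vm * ϱc)
    (hqw : qm = w * (ϱm - ϱc)) (hlam : 0 ≤ lam) (hlv : lam * vm ≤ 1) (hlw : lam * w ≤ 1)
    {a a' b b' c c' : ℝ} (ha : a ≤ a') (hb : b ≤ b') (hc : c ≤ c') :
    godunovStep vm w ϱm qm lam a b c ≤ godunovStep vm w ϱm qm lam a' b' c' := by
  calc godunovStep vm w ϱm qm lam a b c ≤ godunovStep vm w ϱm qm lam a' b c' := by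
        unfold godunovStep
        gcongr
        exacts [gflux_mono_left hv b ha, gflux_anti_right hw b hc]
    _ ≤ godunovStep vm w ϱm qm lam a' b' c' :=
        godunovStep_mono_center hv hw hqv hqw hlam hlv hlw a' c' hb

lemma godunovStep_lower_corner (hv : 0 ≤ vm) (hw : 0 ≤ w) (hϱm : 0 ≤ ϱm) (hqm : 0 ≤ qm)
    {D θ : ℝ} (hθ : 0 ≤ θ) (hD : θ ≤ D) :
    godunovStep vm w ϱm qm lam (-(D - θ)) (-D) (-(D + θ)) = -D + lam * vm * θ := by
  unfold godunovStep gflux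
  rw [min_eq_left (le_min (by nlinarith) (by nlinarith)),
    min_eq_left (le_min (by nlinarith) (by nlinarith))]
  ring

lemma godunovStep_upper_corner (hv : 0 ≤ vm) (hw : 0 ≤ w) (hϱm : 0 ≤ ϱm) (hqm : 0 ≤ qm)
    {E θ : ℝ} (hθ : 0 ≤ θ) (hE : θ ≤ E) :
    godunovStep vm w ϱm qm lam (ϱm + E + θ) (ϱm + E) (ϱm + E - θ) = ϱm + E - lam * w * θ := by
  unfold godunovStep gflux
  rw [min_eq_left (a := w * _) (by nlinarith), min_eq_right (by nlinarith),
    min_eq_left (a := w * _) (by nlinarith), min_eq_right (by nlinarith)]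
  ring

lemma godunovStep_add_mem_Icc (hv : 0 ≤ vm) (hw : 0 ≤ w) (hϱc : 0 ≤ ϱc) (hϱ : ϱc ≤ ϱm)
    (hqv : qm = vm * ϱc) (hqw : qm = w * (ϱm - ϱc)) (hlam : 0 ≤ lam) (hlv : lam * vm ≤ 1)
    (hlw : lam * w ≤ 1) {D E θ corr a b c : ℝ} (hθ : 0 ≤ θ) (hD : θ ≤ D) (hE : θ ≤ E)
    (ha : a ∈ Set.Icc (-(D - θ)) (ϱm + E + θ)) (hb : b ∈ Set.Icc (-D) (ϱm + E))
    (hc : c ∈ Set.Icc (-(D + θ)) (ϱm + E - θ)) (hcorr : |corr| ≤ lam * min vm w * θ) :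
    godunovStep vm w ϱm qm lam a b c + corr ∈ Set.Icc (-D) (ϱm + E) := by
  have hϱm : 0 ≤ ϱm := hϱc.trans hϱ
  have hqm : 0 ≤ qm := hqv ▸ mul_nonneg hv hϱc
  have hmv : lam * min vm w * θ ≤ lam * vm * θ := by gcongr; exact min_le_left _ _
  have hmw : lam * min vm w * θ ≤ lam * w * θ := by gcongr; exact min_le_right _ _
  have lower := godunovStep_mono hv hw hqv hqw hlam hlv hlw ha.1 hb.1 hc.1
  have upper := godunovStep_mono hv hw hqv hqw hlam hlv hlw ha.2 hb.2 hc.2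
  rw [godunovStep_lower_corner hv hw hϱm hqm hθ hD] at lower
  rw [godunovStep_upper_corner hv hw hϱm hqm hθ hE] at upper
  obtain ⟨h₁, h₂⟩ := abs_le.mp hcorr
  constructor <;> linarith

lemma godunovStep_add_mem_estimateBand (hv : 0 ≤ vm) (hw : 0 ≤ w) (hϱc : 0 ≤ ϱc)
    (hϱ : ϱc ≤ ϱm) (hqv : qm = vm * ϱc) (hqw : qm = w * (ϱm - ϱc)) (hlam : 0 ≤ lam)
    (hlv : lam * vm ≤ 1) (hlw : lam * w ≤ 1) {n B θ l corr a b c : ℝ} (hB : 0 ≤ B) (hθ : 0 ≤ θ)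
    (hl1 : 1 ≤ l) (hln : l + 2 ≤ n) (ha : a ∈ estimateBand n ϱm B θ (l - 1))
    (hb : b ∈ estimateBand n ϱm B θ l) (hc : c ∈ estimateBand n ϱm B θ (l + 1))
    (hcorr : |corr| ≤ lam * min vm w * θ) :
    godunovStep vm w ϱm qm lam a b c + corr ∈ estimateBand n ϱm B θ l := by
  have := godunovStep_add_mem_Icc hv hw hϱc hϱ hqv hqw hlam hlv hlw hθ
    (D := B + l * θ) (E := B + (n - 1 - l) * θ) (a := a) (b := b) (c := c)
    (by nlinarith) (by nlinarith)
    ⟨by linarith [ha.1], by linarith [ha.2]⟩ ⟨by linarith [hb.1], by linarith [hb.2]⟩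
    ⟨by linarith [hc.1], by linarith [hc.2]⟩ hcorr
  exact ⟨this.1, by linarith [this.2]⟩

theorem observer_mem_estimateBand (hv : 0 ≤ vm) (hw : 0 ≤ w) (hϱc : 0 ≤ ϱc) (hϱ : ϱc ≤ ϱm)
    (hqv : qm = vm * ϱc) (hqw : qm = w * (ϱm - ϱc)) (hlam : 0 ≤ lam) (hlv : lam * vm ≤ 1)
    (hlw : lam * w ≤ 1) {n : ℕ} (hn : 2 ≤ n) {B θ κ : ℝ} (hB : 0 ≤ B) (hθ : 0 ≤ θ)
    (hκ : κ * B ≤ lam * min vm w * θ) (kl : ℕ) (kbar : ℕ∞) (ρhat ρtrue : ℕ → ℕ → ℝ)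
    (K : ℕ → ℕ → Fin 2 → ℝ)
    (htrue : ∀ k l, l < n → ρtrue k l ∈ Set.Icc 0 ϱm)
    (hinit : ∀ l < n, |ρhat kl l - ρtrue kl l| ≤ B)
    (hbdry : ∀ k, kl < k → (k : ℕ∞) ≤ kbar →
      |ρhat k 0 - ρtrue k 0| ≤ B ∧ |ρhat k (n - 1) - ρtrue k (n - 1)| ≤ B)
    (hint : ∀ k, kl ≤ k → (k : ℕ∞) < kbar → ∀ l, 1 ≤ l → l ≤ n - 2 →
      ρhat (k + 1) l = ρhat k l + lam *
          (gflux vm w ϱm qm (ρhat k (l - 1)) (ρhat k l) -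
            gflux vm w ϱm qm (ρhat k l) (ρhat k (l + 1))) -
        K (k + 1) l 0 * (ρhat k 0 - ρtrue k 0) -
        K (k + 1) l 1 * (ρhat k (n - 1) - ρtrue k (n - 1)))
    (hK : ∀ k, kl < k → (k : ℕ∞) ≤ kbar → ∀ l, l < n → |K k l 0| + |K k l 1| ≤ κ) :
    ∀ k, kl ≤ k → (k : ℕ∞) ≤ kbar → ∀ l < n, ρhat k l ∈ estimateBand n ϱm B θ l := by
  have of_abs_le : ∀ k l, l < n → |ρhat k l - ρtrue k l| ≤ B →
      ρhat k l ∈ estimateBand n ϱm B θ l := fun k l hl =>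
    mem_estimateBand_of_abs_sub_le hθ l.cast_nonneg (by exact_mod_cast hl) (htrue k l hl)
  have hbdry' : ∀ k, kl ≤ k → (k : ℕ∞) ≤ kbar →
      |ρhat k 0 - ρtrue k 0| ≤ B ∧ |ρhat k (n - 1) - ρtrue k (n - 1)| ≤ B := by
    intro k hk hkb
    rcases hk.eq_or_lt with rfl | hlt
    · exact ⟨hinit 0 (by omega), hinit (n - 1) (by omega)⟩
    · exact hbdry k hlt hkb
  intro k hk
  induction k, hk using Nat.le_induction with
  | base => exact fun _ l hl => of_abs_le kl l hl (hinit l hl)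
  | succ k hk ih =>
    intro hkb l hl
    have hk' : (k : ℕ∞) < kbar := (Nat.cast_lt.mpr k.lt_succ_self).trans_le hkb
    rcases Nat.eq_zero_or_pos l with rfl | hl1
    · exact of_abs_le _ 0 hl (hbdry (k + 1) (by omega) hkb).1
    rcases (Nat.le_sub_one_of_lt hl).eq_or_lt with rfl | hl2
    · exact of_abs_le _ (n - 1) hl (hbdry (k + 1) (by omega) hkb).2
    obtain ⟨hx, hy⟩ := hbdry' k hk hk'.le
    have hcorr : |-(K (k + 1) l 0 * (ρhat k 0 - ρtrue k 0) +
        K (k + 1) l 1 * (ρhat k (n - 1) - ρtrue k (n - 1)))| ≤ lam * min vm w * θ := by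
      rw [abs_neg]
      exact (abs_mul_add_mul_le hx hy).trans
        ((mul_le_mul_of_nonneg_right (hK (k + 1) (by omega) hkb l hl) hB).trans hκ)
    have ha := ih hk'.le (l - 1) (by omega)
    have hc := ih hk'.le (l + 1) (by omega)
    rw [Nat.cast_sub hl1, Nat.cast_one] at ha
    rw [Nat.cast_succ] at hc
    have := godunovStep_add_mem_estimateBand hv hw hϱc hϱ hqv hqw hlam hlv hlw hB hθ
      (by exact_mod_cast hl1) (by exact_mod_cast (by omega : l + 2 ≤ n)) ha (ih hk'.le l hl) hc
      hcorr
    rw [hint k hk hk' l hl1 (by omega)]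
    convert this using 1
    unfold godunovStep
    ring

end Godunov

lemma sqrt_sum_sq_sub_lt {n : ℕ} (hn : 2 ≤ n) {x ρ : ℕ → ℝ} {ϱm B θ : ℝ} (hϱm : 0 ≤ ϱm)
    (hθ : 0 ≤ θ) (hρ : ∀ l < n, ρ l ∈ Set.Icc 0 ϱm) (hx0 : |x 0 - ρ 0| < B)
    (hxn : |x (n - 1) - ρ (n - 1)| < B) (hx : ∀ l < n, x l ∈ estimateBand n ϱm B θ l) :
    √(∑ l ∈ range n, (x l - ρ l) ^ 2) < √n * (ϱm + B + (n - 2) * θ) := by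
  have hBh : B ≤ ϱm + B + (n - 2) * θ := by
    have : (2 : ℝ) ≤ n := by exact_mod_cast hn
    nlinarith
  refine sqrt_sum_sq_lt (x := fun l => x l - ρ l) (j := 0) (by omega) (fun l hl => ?_)
    (hx0.trans_le hBh)
  rcases Nat.eq_zero_or_pos l with rfl | hl1
  · exact hx0.le.trans hBh
  rcases (Nat.le_sub_one_of_lt hl).eq_or_lt with rfl | hl2
  · exact hxn.le.trans hBh
  exact abs_sub_le_of_mem_estimateBand hθ (by exact_mod_cast hl1)
    (by exact_mod_cast (by omega : l + 2 ≤ n)) (hρ l hl) (hx l hl)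

theorem stmt8_general
    (n : ℕ) (hn : 2 ≤ n)
    (ϱm ϱc vm w qm : ℝ) (hϱc : 0 < ϱc) (hϱ : ϱc < ϱm) (hvm : 0 < vm)
    (hwdef : w = ϱc * vm / (ϱm - ϱc)) (hqm : qm = vm * ϱc)
    (Δt Δx : ℝ) (hΔt : 0 < Δt) (hΔx : 0 < Δx)
    (hv1 : vm * Δt / Δx < 1) (hw1 : w * Δt / Δx < 1)
    (q1 q2 r1 r2 : ℝ) (hq0 : 0 < q1) (hq : q1 < q2) (hr0 : 0 < r1) (hr : r1 < r2)
    (kl : ℕ) (kbar : ℕ∞)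
    (ε : ℝ) (hε : 0 < ε)
    (Γ : Matrix (Fin n) (Fin n) ℝ)
    (ρhat ρtrue : ℕ → ℕ → ℝ)
    (htrue : ∀ k l, l < n → ρtrue k l ∈ Set.Icc 0 ϱm)
    (hinit : Real.sqrt (∑ l ∈ Finset.range n, (ρhat kl l - ρtrue kl l) ^ 2) < ε)
    (Γcpost Γcprior Kc Qc Rc : ℕ → Matrix (Fin 2) (Fin 2) ℝ)
    (hQc : ∀ k, kl ≤ k → (k : ℕ∞) < kbar →
      loewnerLT (q1 • 1) (Qc k) ∧ loewnerLT (Qc k) (q2 • 1))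
    (hRc : ∀ k, kl < k → (k : ℕ∞) ≤ kbar →
      loewnerLT (r1 • 1) (Rc k) ∧ loewnerLT (Rc k) (r2 • 1))
    (hΓc0 : (Γcpost kl).PosDef)
    (hcprior : ∀ k, kl ≤ k → (k : ℕ∞) < kbar → Γcprior (k + 1) = Γcpost k + Qc k)
    (hKc : ∀ k, kl ≤ k → (k : ℕ∞) < kbar →
      Kc (k + 1) = Γcprior (k + 1) * (Γcprior (k + 1) + Rc (k + 1))⁻¹)
    (hcpost : ∀ k, kl ≤ k → (k : ℕ∞) < kbar →
      Γcpost (k + 1) = Γcprior (k + 1) - Kc (k + 1) * Γcprior (k + 1))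
    (hbrec : ∀ k, kl ≤ k → (k : ℕ∞) < kbar →
      ![ρhat (k + 1) 0 - ρtrue (k + 1) 0, ρhat (k + 1) (n - 1) - ρtrue (k + 1) (n - 1)] =
        (1 - Kc (k + 1)).mulVec
          ![ρhat k 0 - ρtrue k 0, ρhat k (n - 1) - ρtrue k (n - 1)])
    (K : ℕ → ℕ → Fin 2 → ℝ)
    (hint : ∀ k, kl ≤ k → (k : ℕ∞) < kbar → ∀ l, 1 ≤ l → l ≤ n - 2 →
      ρhat (k + 1) l = ρhat k l + Δt / Δx *
          (gflux vm w ϱm qm (ρhat k (l - 1)) (ρhat k l) -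
            gflux vm w ϱm qm (ρhat k l) (ρhat k (l + 1))) -
        K (k + 1) l 0 * (ρhat k 0 - ρtrue k 0) -
        K (k + 1) l 1 * (ρhat k (n - 1) - ρtrue k (n - 1)))
    (hKbound : ∀ k, kl < k → (k : ℕ∞) ≤ kbar → ∀ l, l < n →
      |K k l 0| + |K k l 1| ≤ frakK n Δt Δx vm w q1 q2 r1 r2 Γ) :
    ∀ k, kl < k → (k : ℕ∞) ≤ kbar →
      Real.sqrt (∑ l ∈ Finset.range n, (ρhat k l - ρtrue k l) ^ 2) <
        Real.sqrt n * (ϱm + ε * (cZero q1 q2 r1 r2 +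
          ((n : ℝ) - 2) * frakCc n Δt Δx vm w q1 q2 r1 r2 Γ)) := by
  intro k hk hkb
  have hw : 0 < w := hwdef ▸ div_pos (mul_pos hϱc hvm) (sub_pos.mpr hϱ)
  have hκ : 0 ≤ frakK n Δt Δx vm w q1 q2 r1 r2 Γ :=
    (add_nonneg (abs_nonneg _) (abs_nonneg _)).trans (hKbound k hk hkb 0 (by omega))
  have hc0 : 1 ≤ cZero q1 q2 r1 r2 := le_max_left _ _
  have hεB : ε ≤ cZero q1 q2 r1 r2 * ε := le_mul_of_one_le_left hε.le hc0
  have hθ : 0 ≤ ε * frakCc n Δt Δx vm w q1 q2 r1 r2 Γ := by unfold frakCc; positivity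
  have hbdry := boundary_error_lt hq0 hq hr0 hr hε.le kl kbar Γcpost Γcprior Kc Qc Rc hQc hRc
    hΓc0 hcprior hKc hcpost (fun j => ρhat j 0 - ρtrue j 0)
    (fun j => ρhat j (n - 1) - ρtrue j (n - 1)) hbrec
    (sq_add_sq_lt_of_sqrt_sum_sq_lt (x := fun l => ρhat kl l - ρtrue kl l) hn hinit)
  have hband := observer_mem_estimateBand (lam := Δt / Δx) hvm.le hw.le hϱc.le hϱ.le hqm
    (by rw [hqm, hwdef]; field_simp [(sub_pos.mpr hϱ).ne']) (by positivity)
    ((by ring : Δt / Δx * vm = vm * Δt / Δx).trans_le hv1.le)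
    ((by ring : Δt / Δx * w = w * Δt / Δx).trans_le hw1.le) hn (hε.le.trans hεB) hθ
    (le_of_eq (by unfold frakCc; field_simp)) kl kbar ρhat ρtrue K htrue
    (fun l hl =>
      (abs_lt_of_sqrt_sum_sq_lt (x := fun l => ρhat kl l - ρtrue kl l) hl hinit).le.trans hεB)
    (fun j hj hjb => ⟨(hbdry j hj hjb).1.le, (hbdry j hj hjb).2.le⟩) hint hKbound
  refine (sqrt_sum_sq_sub_lt hn (hϱc.trans hϱ).le hθ (htrue k) (hbdry k hk hkb).1
    (hbdry k hk hkb).2 (hband k hk.le hkb)).trans_eq ?_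
  ring

/-- Proposition 3 / `prop_u_bound`: on an unobservable time interval,
the mean estimation error stays below `𝔥(ε, Γ) = √n·(ϱ_m + ε·(c₀ + (n−2)·𝔠(Γ)))`. -/
theorem stmt8
    (n : ℕ) (hn : 2 ≤ n)
    (ϱm ϱc vm w qm : ℝ) (hϱc : 0 < ϱc) (hϱ : ϱc < ϱm) (hvm : 0 < vm)
    (hwdef : w = ϱc * vm / (ϱm - ϱc)) (hqm : qm = vm * ϱc)
    (Δt Δx : ℝ) (hΔt : 0 < Δt) (hΔx : 0 < Δx)
    (hv1 : vm * Δt / Δx < 1) (hw1 : w * Δt / Δx < 1)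
    (q1 q2 r1 r2 : ℝ) (hq0 : 0 < q1) (hq : q1 < q2) (hr0 : 0 < r1) (hr : r1 < r2)
    (kl : ℕ) (kbar : ℕ∞) (hkl : (kl : ℕ∞) < kbar)
    (ε : ℝ) (hε : 0 < ε)
    (Γ : Matrix (Fin n) (Fin n) ℝ) (hΓ : Γ.PosDef)
    (ρhat ρtrue : ℕ → ℕ → ℝ)
    (htrue : ∀ k l, l < n → ρtrue k l ∈ Set.Icc 0 ϱm)
    (hinit : Real.sqrt (∑ l ∈ Finset.range n, (ρhat kl l - ρtrue kl l) ^ 2) < ε)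
    (Γcpost Γcprior Kc Qc Rc : ℕ → Matrix (Fin 2) (Fin 2) ℝ)
    (hQc : ∀ k, kl ≤ k → (k : ℕ∞) < kbar →
      loewnerLT (q1 • 1) (Qc k) ∧ loewnerLT (Qc k) (q2 • 1))
    (hRc : ∀ k, kl < k → (k : ℕ∞) ≤ kbar →
      loewnerLT (r1 • 1) (Rc k) ∧ loewnerLT (Rc k) (r2 • 1))
    (hΓc0 : (Γcpost kl).PosDef)
    (hcprior : ∀ k, kl ≤ k → (k : ℕ∞) < kbar → Γcprior (k + 1) = Γcpost k + Qc k)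
    (hKc : ∀ k, kl ≤ k → (k : ℕ∞) < kbar →
      Kc (k + 1) = Γcprior (k + 1) * (Γcprior (k + 1) + Rc (k + 1))⁻¹)
    (hcpost : ∀ k, kl ≤ k → (k : ℕ∞) < kbar →
      Γcpost (k + 1) = Γcprior (k + 1) - Kc (k + 1) * Γcprior (k + 1))
    (hbrec : ∀ k, kl ≤ k → (k : ℕ∞) < kbar →
      ![ρhat (k + 1) 0 - ρtrue (k + 1) 0, ρhat (k + 1) (n - 1) - ρtrue (k + 1) (n - 1)] =
        (1 - Kc (k + 1)).mulVec
          ![ρhat k 0 - ρtrue k 0, ρhat k (n - 1) - ρtrue k (n - 1)])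
    (K : ℕ → ℕ → Fin 2 → ℝ)
    (hint : ∀ k, kl ≤ k → (k : ℕ∞) < kbar → ∀ l, 1 ≤ l → l ≤ n - 2 →
      ρhat (k + 1) l = ρhat k l + Δt / Δx *
          (gflux vm w ϱm qm (ρhat k (l - 1)) (ρhat k l) -
            gflux vm w ϱm qm (ρhat k l) (ρhat k (l + 1))) -
        K (k + 1) l 0 * (ρhat k 0 - ρtrue k 0) -
        K (k + 1) l 1 * (ρhat k (n - 1) - ρtrue k (n - 1)))
    (hKbound : ∀ k, kl < k → (k : ℕ∞) ≤ kbar → ∀ l, l < n →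
      |K k l 0| + |K k l 1| ≤ frakK n Δt Δx vm w q1 q2 r1 r2 Γ) :
    ∀ k, kl < k → (k : ℕ∞) ≤ kbar →
      Real.sqrt (∑ l ∈ Finset.range n, (ρhat k l - ρtrue k l) ^ 2) <
        Real.sqrt n * (ϱm + ε * (cZero q1 q2 r1 r2 +
          ((n : ℝ) - 2) * frakCc n Δt Δx vm w q1 q2 r1 r2 Γ)) :=
  stmt8_general n hn ϱm ϱc vm w qm hϱc hϱ hvm hwdef hqm Δt Δx hΔt hΔx hv1 hw1 q1 q2 r1 r2 hq0 hq hr0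
    hr kl kbar ε hε Γ ρhat ρtrue htrue hinit Γcpost Γcprior Kc Qc Rc hQc hRc hΓc0 hcprior hKc hcpost
    hbrec K hint hKbound

end
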